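/- arXiv:1610.07905 — 6 statements merged into one kernel-verified Lean document; each statement's English description precedes it below -/
import Mathlib

section
/- Let y₁,…,y_k ∈ ℝ^n. The map d_{x₀}h : x ↦ 2(⟨x₀ − y₁, x⟩,…,⟨x₀ − y_k, x⟩) is transversal to the diagonal D_k of ℝ^k (i.e., its image together with D_k spans ℝ^k) if and only if the points y₁,…,y_k are affinely independent. -/
/-! A subspace of `ℝ^k` is everything iff its orthogonal complement is zero. A vector `c` is
orthogonal to the diagonal iff `∑ cᵢ = 0`, and it is orthogonal to the range of `L` iff
`∑ cᵢ (x₀ - yᵢ) = 0`, which under `∑ cᵢ = 0` reads `∑ cᵢ yᵢ = 0`. So transversality says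
that the only affine dependence among the `yᵢ` is the trivial one. -/

open Finset
open scoped RealInnerProductSpace

theorem affineIndependent_iff_forall_sum_eq_zero {k V ι : Type*} [Ring k] [AddCommGroup V]
    [Module k V] [Fintype ι] {p : ι → V} :
    AffineIndependent k p ↔ ∀ w : ι → k, ∑ i, w i = 0 → ∑ i, w i • p i = 0 → w = 0 := by
  rw [affineIndependent_iff_of_fintype]
  refine forall_congr' fun w => forall_congr' fun hw => ?_
  rw [univ.weightedVSub_eq_linear_combination hw, funext_iff]
  rfl

theorem sum_smul_sub_of_sum_eq_zero {k V ι : Type*} [Ring k] [AddCommGroup V] [Module k V]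
    {s : Finset ι} {c : ι → k} (hc : ∑ i ∈ s, c i = 0) (x₀ : V) (y : ι → V) :
    ∑ i ∈ s, c i • (x₀ - y i) = -∑ i ∈ s, c i • y i := by
  simp only [smul_sub, sum_sub_distrib, ← sum_smul, hc, zero_smul, zero_sub]

section OrthogonalRange

variable {ι E : Type*} [Fintype ι] [NormedAddCommGroup E] [InnerProductSpace ℝ E]

theorem inner_apply_eq_inner_sum_smul {v : ι → E} {L : E →ₗ[ℝ] EuclideanSpace ℝ ι}
    (hL : ∀ x i, L x i = ⟪v i, x⟫) (x : E) (c : EuclideanSpace ℝ ι) :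
    ⟪L x, c⟫ = ⟪∑ i, c i • v i, x⟫ := by
  simp only [PiLp.inner_apply, sum_inner, real_inner_smul_left, hL, RCLike.inner_apply,
    conj_trivial, mul_comm]

theorem mem_orthogonal_range_iff_sum_smul_eq_zero {v : ι → E} {L : E →ₗ[ℝ] EuclideanSpace ℝ ι}
    (hL : ∀ x i, L x i = ⟪v i, x⟫) (c : EuclideanSpace ℝ ι) :
    c ∈ (LinearMap.range L)ᗮ ↔ ∑ i, c i • v i = 0 := by
  simp only [Submodule.mem_orthogonal, LinearMap.mem_range, forall_exists_index,
    forall_apply_eq_imp_iff, inner_apply_eq_inner_sum_smul hL]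
  exact ⟨fun h => inner_self_eq_zero.1 (h _), fun h x => by rw [h, inner_zero_left]⟩

end OrthogonalRange

theorem mem_orthogonal_span_one_iff {ι : Type*} [Fintype ι] (c : EuclideanSpace ℝ ι) :
    c ∈ (ℝ ∙ (WithLp.toLp 2 (fun _ => 1 : ι → ℝ) : EuclideanSpace ℝ ι))ᗮ ↔ ∑ i, c i = 0 := by
  simp [Submodule.mem_orthogonal_singleton_iff_inner_right, PiLp.inner_apply]

theorem mem_orthogonal_range_sup_span_one_iff {ι E : Type*} [Fintype ι] [NormedAddCommGroup E]
    [InnerProductSpace ℝ E] {a : ℝ} (ha : a ≠ 0) (x₀ : E) (y : ι → E)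
    {L : E →ₗ[ℝ] EuclideanSpace ℝ ι} (hL : ∀ x i, L x i = a * ⟪x₀ - y i, x⟫)
    (c : EuclideanSpace ℝ ι) :
    c ∈ (LinearMap.range L ⊔ ℝ ∙ WithLp.toLp 2 (fun _ => 1))ᗮ ↔
      ∑ i, c i = 0 ∧ ∑ i, c i • y i = 0 := by
  have hL' : ∀ x i, L x i = ⟪a • (x₀ - y i), x⟫ := by
    simpa only [real_inner_smul_left] using hL
  rw [← Submodule.inf_orthogonal, Submodule.mem_inf, mem_orthogonal_span_one_iff,
    mem_orthogonal_range_iff_sum_smul_eq_zero hL']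
  simp_rw [smul_comm (c _) a, ← smul_sum]
  constructor
  · rintro ⟨hv, hc⟩
    simpa [ha, hc, sum_smul_sub_of_sum_eq_zero hc] using hv
  · rintro ⟨hc, hy⟩
    simp [hc, sum_smul_sub_of_sum_eq_zero hc, hy]

theorem transversal_to_diagonal_iff_affineIndependent_general (n k : ℕ)
    (x₀ : EuclideanSpace ℝ (Fin n)) (y : Fin k → EuclideanSpace ℝ (Fin n))
    (L : EuclideanSpace ℝ (Fin n) →ₗ[ℝ] EuclideanSpace ℝ (Fin k))
    (hL : ∀ x i, L x i = 2 * (inner ℝ (x₀ - y i) x : ℝ)) :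
    (LinearMap.range L ⊔
        Submodule.span ℝ {(WithLp.toLp 2 (fun _ => 1 : Fin k → ℝ) : EuclideanSpace ℝ (Fin k))} = ⊤) ↔
      AffineIndependent ℝ y := by
  have mem_orthogonal_iff := mem_orthogonal_range_sup_span_one_iff two_ne_zero x₀ y hL
  rw [← Submodule.orthogonal_eq_bot_iff, Submodule.eq_bot_iff,
    affineIndependent_iff_forall_sum_eq_zero]
  constructor
  · intro h w hw hwy
    simpa using congrArg WithLp.ofLp (h (WithLp.toLp 2 w) ((mem_orthogonal_iff _).2 ⟨hw, hwy⟩))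
  · intro h c hc
    obtain ⟨hc, hcy⟩ := (mem_orthogonal_iff c).1 hc
    simpa using congrArg (WithLp.toLp 2) (h c.ofLp hc hcy)

/-- The map `x ↦ 2(⟨x₀ - y₁, x⟩, …, ⟨x₀ - y_k, x⟩)` is transversal to the diagonal of
`ℝ^k` (its range together with the diagonal spans `ℝ^k`) iff `y₁, …, y_k` are affinely
independent. -/
theorem transversal_to_diagonal_iff_affineIndependent (n k : ℕ) [NeZero k]
    (x₀ : EuclideanSpace ℝ (Fin n)) (y : Fin k → EuclideanSpace ℝ (Fin n))
    (L : EuclideanSpace ℝ (Fin n) →ₗ[ℝ] EuclideanSpace ℝ (Fin k))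
    (hL : ∀ x i, L x i = 2 * (inner ℝ (x₀ - y i) x : ℝ)) :
    (LinearMap.range L ⊔
        Submodule.span ℝ {(WithLp.toLp 2 (fun _ => 1 : Fin k → ℝ) : EuclideanSpace ℝ (Fin k))} = ⊤) ↔
      AffineIndependent ℝ y :=
  transversal_to_diagonal_iff_affineIndependent_general n k x₀ y L hL
end

section
/- Let y₁,…,y_k ∈ ℝ^n be points all at equal distance r > 0 from x₀, let h(x) = (‖x−y₁‖²,…,‖x−y_k‖²), h₁(t) = t/∑t_j, and z₀ = h(x₀) = (r²,…,r²). Then the composition d_{z₀}h₁ ∘ d_{x₀}h is surjective onto the tangent space of the simplex (equivalently, h₁ ∘ h is a submersion at x₀) if and only if y₁,…,y_k form a non-degenerate (k−1)-dimensional simplex. -/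
/-!
The derivative of `h` at `x₀` is `x ↦ (2 ⟪x₀ - yᵢ, x⟫)ᵢ`. Since `z₀ = h x₀` is a constant vector,
the derivative of the normalisation `t ↦ t / ∑ tⱼ` at `z₀` is, up to the factor `1 / (k r²)`, the
centering `u ↦ u - mean u`; centering eliminates `x₀`, so the composite is
`x ↦ (2 / (k r²)) (⟪m - yᵢ, x⟫)ᵢ` with `m` the centroid of the `yᵢ`. By the finite Fredholm
alternative this map reaches every `v` with `∑ vᵢ = 0` iff every relation `∑ uᵢ (m - yᵢ) = 0` has
constant coefficients, and subtracting the mean of `u` turns such a relation into an affine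
dependence `∑ uᵢ yᵢ = 0`, `∑ uᵢ = 0`: this is affine independence.
-/

open scoped RealInnerProductSpace

variable {ι E : Type*} [Fintype ι] [NormedAddCommGroup E] [InnerProductSpace ℝ E]

theorem exists_forall_inner_eq_iff (w : ι → E) (v : ι → ℝ) :
    (∃ x : E, ∀ i, ⟪w i, x⟫ = v i) ↔ ∀ u : ι → ℝ, ∑ i, u i • w i = 0 → ∑ i, u i * v i = 0 := by
  have inner_sum_smul (u : ι → ℝ) (x : E) : ⟪∑ i, u i • w i, x⟫ = ∑ i, u i * ⟪w i, x⟫ := by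
    simp only [sum_inner, real_inner_smul_left]
  constructor
  · rintro ⟨x, hx⟩ u hu
    simp only [← hx, ← inner_sum_smul, hu, inner_zero_left]
  · intro H
    let T : E →ₗ[ℝ] EuclideanSpace ℝ ι :=
      (WithLp.linearEquiv 2 ℝ (ι → ℝ)).symm.toLinearMap ∘ₗ LinearMap.pi fun i => innerₛₗ ℝ (w i)
    have hT (q : EuclideanSpace ℝ ι) (x : E) : ⟪q, T x⟫ = ⟪∑ i, q i • w i, x⟫ := by
      simp [T, inner_sum_smul, PiLp.inner_apply, mul_comm]
    have hv : WithLp.toLp 2 v ∈ (LinearMap.range T)ᗮᗮ := by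
      refine (Submodule.mem_orthogonal' _ _).2 fun q hq => ?_
      have hq0 : ∑ i, q i • w i = 0 := by
        rw [← inner_self_eq_zero (𝕜 := ℝ), ← hT]
        exact Submodule.inner_left_of_mem_orthogonal (LinearMap.mem_range_self T _) hq
      simpa [PiLp.inner_apply, mul_comm] using H q hq0
    rw [Submodule.orthogonal_orthogonal] at hv
    obtain ⟨x, hx⟩ := hv
    exact ⟨x, fun i => congrArg (· i) hx⟩

theorem forall_sum_eq_zero_sum_mul_eq_zero_iff (u : ι → ℝ) :
    (∀ v : ι → ℝ, ∑ i, v i = 0 → ∑ i, u i * v i = 0) ↔ ∀ i j, u i = u j := by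
  classical
  constructor
  · intro H i j
    have := H (Pi.single i 1 - Pi.single j 1) (by simp)
    simpa [mul_sub, Finset.sum_sub_distrib, sub_eq_zero, Pi.single_apply] using this
  · intro H v hv
    cases isEmpty_or_nonempty ι with
    | inl _ => simp
    | inr hne =>
      obtain ⟨j⟩ := hne
      rw [Finset.sum_congr rfl fun i _ => by rw [H i j], ← Finset.mul_sum, hv, mul_zero]

theorem sum_smul_const_sub (m : E) (y : ι → E) (u : ι → ℝ) :
    ∑ i, u i • (m - y i) = (∑ i, u i) • m - ∑ i, u i • y i := by
  simp only [smul_sub, Finset.sum_sub_distrib, Finset.sum_smul]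

theorem affineIndependent_iff_eq_const_of_sum_smul_centroid_sub [Nonempty ι] (y : ι → E) :
    AffineIndependent ℝ y ↔ ∀ u : ι → ℝ,
      ∑ i, u i • ((Fintype.card ι : ℝ)⁻¹ • ∑ j, y j - y i) = 0 → ∀ i j, u i = u j := by
  set N : ℝ := (Fintype.card ι : ℝ)
  have hN : N ≠ 0 := Nat.cast_ne_zero.2 Fintype.card_ne_zero
  simp only [affineIndependent_iff_of_fintype, sum_smul_const_sub, sub_eq_zero]
  constructor
  · intro H u hu i j
    have hsum : ∑ i, (u i - (∑ j, u j) / N) = 0 := by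
      rw [Finset.sum_sub_distrib, Finset.sum_const, Finset.card_univ, nsmul_eq_mul]
      field_simp; ring
    have hmean := H (fun i => u i - (∑ j, u j) / N) hsum (by
      rw [Finset.weightedVSub_eq_linear_combination _ hsum]
      simp only [sub_smul, Finset.sum_sub_distrib, ← Finset.smul_sum, ← hu, smul_smul]
      rw [div_eq_mul_inv, sub_self])
    linarith [hmean i, hmean j]
  · intro H u hu0 hu i
    rw [Finset.weightedVSub_eq_linear_combination _ hu0] at hu
    have hconst := H u (by rw [hu0, hu, zero_smul])
    rw [Finset.sum_congr rfl fun j _ => hconst j i, Finset.sum_const, Finset.card_univ,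
      nsmul_eq_mul, mul_eq_zero] at hu0
    exact hu0.resolve_left hN

theorem forall_sum_eq_zero_exists_inner_centroid_sub_eq_iff [Nonempty ι] (y : ι → E) :
    (∀ v : EuclideanSpace ℝ ι, ∑ i, v i = 0 →
        ∃ x : E, ∀ i, ⟪(Fintype.card ι : ℝ)⁻¹ • ∑ j, y j - y i, x⟫ = v i) ↔
      AffineIndependent ℝ y := by
  set w : ι → E := fun i => (Fintype.card ι : ℝ)⁻¹ • ∑ j, y j - y i
  calc (∀ v : EuclideanSpace ℝ ι, ∑ i, v i = 0 → ∃ x : E, ∀ i, ⟪w i, x⟫ = v i)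
      ↔ ∀ v : ι → ℝ, ∑ i, v i = 0 → ∃ x : E, ∀ i, ⟪w i, x⟫ = v i :=
        (WithLp.equiv 2 (ι → ℝ)).forall_congr_left
    _ ↔ ∀ u : ι → ℝ, ∑ i, u i • w i = 0 → ∀ v : ι → ℝ, ∑ i, v i = 0 → ∑ i, u i * v i = 0 := by
        simp only [exists_forall_inner_eq_iff]
        exact ⟨fun H u hu v hv => H v hv u hu, fun H v hv u hu => H u hu v hv⟩
    _ ↔ ∀ u : ι → ℝ, ∑ i, u i • w i = 0 → ∀ i j, u i = u j := by
        simp only [forall_sum_eq_zero_sum_mul_eq_zero_iff]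
    _ ↔ AffineIndependent ℝ y := (affineIndependent_iff_eq_const_of_sum_smul_centroid_sub y).symm

theorem inner_centroid_sub (p x : E) (y : ι → E) (i : ι) :
    ⟪(Fintype.card ι : ℝ)⁻¹ • ∑ j, y j - y i, x⟫ =
      ⟪p - y i, x⟫ - (∑ j, ⟪p - y j, x⟫) / Fintype.card ι := by
  have : Nonempty ι := ⟨i⟩
  have hN : (Fintype.card ι : ℝ) ≠ 0 := Nat.cast_ne_zero.2 Fintype.card_ne_zero
  simp only [inner_sub_left, real_inner_smul_left, sum_inner, Finset.sum_sub_distrib,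
    Finset.sum_const, Finset.card_univ, nsmul_eq_mul]
  field_simp
  ring

theorem fderiv_euclidean_apply {H : Type*} [NormedAddCommGroup H] [NormedSpace ℝ H]
    {f : H → EuclideanSpace ℝ ι} {y : H} (hf : DifferentiableAt ℝ f y) (v : H) (i : ι) :
    fderiv ℝ f y v i = fderiv ℝ (fun x => f x i) y v := by
  change _ = fderiv ℝ ((fun g : EuclideanSpace ℝ ι => g i) ∘ f) y v
  rw [((PiLp.hasFDerivAt_apply 2 (f y) i).comp y hf.hasFDerivAt).fderiv]
  rfl

theorem fderiv_apply_of_apply_eq_norm_sub_sq {h : E → EuclideanSpace ℝ ι} {y : ι → E}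
    (hh : ∀ x i, h x i = ‖x - y i‖ ^ 2) (x₀ x : E) (i : ι) :
    fderiv ℝ h x₀ x i = 2 * ⟪x₀ - y i, x⟫ := by
  have hcoord (i : ι) : HasFDerivAt (fun x => h x i)
      (2 • (innerSL ℝ (x₀ - y i)).comp (ContinuousLinearMap.id ℝ E)) x₀ := by
    simp_rw [hh]
    exact ((hasFDerivAt_id x₀).sub_const (y i)).norm_sq
  rw [fderiv_euclidean_apply (differentiableAt_euclidean.2 fun i => (hcoord i).differentiableAt),
    (hcoord i).fderiv]
  simp [inner_sub_left]

theorem hasFDerivAt_inv_smul_self {F : Type*} [NormedAddCommGroup F] [NormedSpace ℝ F]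
    (S : F →L[ℝ] ℝ) {z : F} (hz : S z ≠ 0) :
    HasFDerivAt (fun t => (S t)⁻¹ • t)
      ((S z)⁻¹ • ContinuousLinearMap.id ℝ F - ((S z) ^ 2)⁻¹ • S.smulRight z) z := by
  have hinv := (hasDerivAt_inv hz).comp_hasFDerivAt z S.hasFDerivAt
  refine (hinv.smul (hasFDerivAt_id z)).congr_fderiv ?_
  ext u
  simp [sub_eq_add_neg, mul_smul]

theorem fderiv_apply_of_eq_inv_sum_smul [Nonempty ι]
    {h₁ : EuclideanSpace ℝ ι → EuclideanSpace ℝ ι}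
    (hh₁ : ∀ t : EuclideanSpace ℝ ι, (∀ i, 0 < t i) → h₁ t = (∑ i, t i)⁻¹ • t)
    {z : EuclideanSpace ℝ ι} {a : ℝ} (ha : 0 < a) (hz : ∀ i, z i = a)
    (u : EuclideanSpace ℝ ι) (i : ι) :
    fderiv ℝ h₁ z u i =
      ((Fintype.card ι : ℝ) * a)⁻¹ * (u i - (∑ j, u j) / Fintype.card ι) := by
  set S : EuclideanSpace ℝ ι →L[ℝ] ℝ := ∑ j, EuclideanSpace.proj j
  have hS (t : EuclideanSpace ℝ ι) : S t = ∑ j, t j := by simp [S]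
  have hSz : S z = Fintype.card ι * a := by simp [hS, hz]
  have hpos : ∀ᶠ t in nhds z, ∀ i, 0 < t i := Filter.eventually_all.2 fun i =>
    ((PiLp.continuous_apply 2 _ i).tendsto z).eventually (lt_mem_nhds (hz i ▸ ha))
  have heq : h₁ =ᶠ[nhds z] fun t => (S t)⁻¹ • t :=
    hpos.mono fun t ht => by simp only [hh₁ t ht, hS]
  have hN : (Fintype.card ι : ℝ) ≠ 0 := Nat.cast_ne_zero.2 Fintype.card_ne_zero
  rw [heq.fderiv_eq, (hasFDerivAt_inv_smul_self S (by rw [hSz]; positivity)).fderiv]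
  simp only [hSz, sub_apply, smul_apply, ContinuousLinearMap.id_apply,
    ContinuousLinearMap.smulRight_apply, hS, PiLp.sub_apply, PiLp.smul_apply, smul_eq_mul, hz]
  field_simp

/-- For points `y₁, …, y_k` at equal distance `r > 0` from `x₀`, the composition
`d_{z₀}h₁ ∘ d_{x₀}h` is surjective onto the tangent space `{∑ vᵢ = 0}` of the simplex
iff `y₁, …, y_k` form a non-degenerate `(k-1)`-simplex (are affinely independent). -/
theorem submersion_iff_nondegenerate_simplex (n k : ℕ) [NeZero k]
    (x₀ : EuclideanSpace ℝ (Fin n)) (y : Fin k → EuclideanSpace ℝ (Fin n))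
    (r : ℝ) (hr : 0 < r) (hdist : ∀ i, ‖x₀ - y i‖ = r)
    (h : EuclideanSpace ℝ (Fin n) → EuclideanSpace ℝ (Fin k))
    (hh : ∀ x i, h x i = ‖x - y i‖ ^ 2)
    (h₁ : EuclideanSpace ℝ (Fin k) → EuclideanSpace ℝ (Fin k))
    (hh₁ : ∀ t : EuclideanSpace ℝ (Fin k), (∀ i, 0 < t i) →
      h₁ t = (∑ i, t i)⁻¹ • t) :
    (∀ v : EuclideanSpace ℝ (Fin k), (∑ i, v i) = 0 →
        ∃ x : EuclideanSpace ℝ (Fin n), fderiv ℝ h₁ (h x₀) (fderiv ℝ h x₀ x) = v) ↔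
      AffineIndependent ℝ y := by
  set c : ℝ := 2 / (Fintype.card (Fin k) * r ^ 2)
  have hc : c ≠ 0 := by have : 0 < Fintype.card (Fin k) := Fintype.card_pos; positivity
  have hz (i : Fin k) : h x₀ i = r ^ 2 := by rw [hh, hdist]
  have hcomp (x : EuclideanSpace ℝ (Fin n)) (i : Fin k) :
      fderiv ℝ h₁ (h x₀) (fderiv ℝ h x₀ x) i =
        ⟪(Fintype.card (Fin k) : ℝ)⁻¹ • ∑ j, y j - y i, c • x⟫ := by
    rw [real_inner_smul_right, inner_centroid_sub x₀]
    simp only [fderiv_apply_of_eq_inv_sum_smul hh₁ (by positivity) hz,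
      fderiv_apply_of_apply_eq_norm_sub_sq hh, ← Finset.mul_sum, c]
    ring
  rw [← forall_sum_eq_zero_exists_inner_centroid_sub_eq_iff]
  refine forall₂_congr fun v _ => ?_
  simp only [PiLp.ext_iff, hcomp]
  exact ⟨fun ⟨x, hx⟩ => ⟨c • x, hx⟩,
    fun ⟨x, hx⟩ => ⟨c⁻¹ • x, by simpa only [smul_inv_smul₀ hc] using hx⟩⟩
end

section
/- Let f : ℝ^n → ℝ be locally Lipschitz and let a ∈ ℝ^n. Then the Clarke generalized gradient ∂f(a), defined as the convex hull of all limits lim grad f(x_ν) along sequences x_ν → a of differentiability points of f, is a nonempty compact convex subset of ℝ^n. -/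
/-!
By Rademacher's theorem the differentiability points of `f` are dense, and near `a` their
gradients are bounded by a local Lipschitz constant, so a subsequence of gradients along
differentiability points tending to `a` converges: the set of limiting gradients is nonempty.
It is bounded by the same constant, and closed, being the slice over `a` of the closure of the
graph of `fderiv ℝ f` restricted to the differentiability points; hence it is compact. By
Carathéodory's theorem, the convex hull of a compact set in a space of dimension `d` is the
continuous image of (simplex) × (compact set)^(d+1), hence compact.
-/

open Filter Topology

noncomputable def clarkeGradient {E : Type*} [NormedAddCommGroup E] [NormedSpace ℝ E]
    (f : E → ℝ) (a : E) : Set (E →L[ℝ] ℝ) :=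
  convexHull ℝ {L | ∃ u : ℕ → E, (∀ n, DifferentiableAt ℝ f (u n)) ∧
    Tendsto u atTop (𝓝 a) ∧ Tendsto (fun n => fderiv ℝ f (u n)) atTop (𝓝 L)}

section Caratheodory

variable {𝕜 E : Type*} [Field 𝕜] [LinearOrder 𝕜] [IsStrictOrderedRing 𝕜]
  [AddCommGroup E] [Module 𝕜 E] [FiniteDimensional 𝕜 E]

theorem exists_fin_finrank_succ_of_mem_convexHull {s : Set E} {x : E}
    (hx : x ∈ convexHull 𝕜 s) :
    ∃ w ∈ stdSimplex 𝕜 (Fin (Module.finrank 𝕜 E + 1)),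
      ∃ z : Fin (Module.finrank 𝕜 E + 1) → E, (∀ i, z i ∈ s) ∧ ∑ i, w i • z i = x := by
  obtain ⟨ι, _, z, w, hzs, hind, hw₀, hw₁, rfl⟩ := eq_pos_convex_span_of_mem_convexHull hx
  obtain ⟨i₀⟩ : Nonempty ι := by
    by_contra h
    simp [not_nonempty_iff.1 h] at hw₁
  obtain ⟨e⟩ : Nonempty (ι ↪ Fin (Module.finrank 𝕜 E + 1)) :=
    Function.Embedding.nonempty_of_card_le <|
      hind.card_le_finrank_succ.trans (by simpa using Submodule.finrank_le _)
  classical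
  -- pad the convex combination with points `z i₀` of weight zero
  have hout : ∀ j ∉ Set.range e, Function.extend e w 0 j = 0 := fun j hj =>
    Function.extend_apply' _ _ _ hj
  refine ⟨Function.extend e w 0, ⟨fun j => ?_, ?_⟩, Function.extend e z fun _ => z i₀,
    fun j => ?_, ?_⟩
  · by_cases hj : j ∈ Set.range e
    · obtain ⟨i, rfl⟩ := hj
      simpa [e.injective.extend_apply] using (hw₀ i).le
    · simp [hout j hj]
  · rw [← hw₁]
    exact (Fintype.sum_of_injective e e.injective _ _ hout
      fun i => (e.injective.extend_apply _ _ i).symm).symm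
  · by_cases hj : j ∈ Set.range e
    · obtain ⟨i, rfl⟩ := hj
      simpa [e.injective.extend_apply] using hzs ⟨i, rfl⟩
    · simpa [Function.extend_apply' _ _ _ hj] using hzs ⟨i₀, rfl⟩
  · refine (Fintype.sum_of_injective e e.injective _ _ (fun j hj => by simp [hout j hj])
      fun i => ?_).symm
    simp [e.injective.extend_apply]

end Caratheodory

section CompactConvexHull

variable {E : Type*} [NormedAddCommGroup E] [NormedSpace ℝ E] [FiniteDimensional ℝ E]

theorem convexHull_eq_image_stdSimplex_prod_pi (s : Set E) :
    convexHull ℝ s = (fun p : (Fin (Module.finrank ℝ E + 1) → ℝ) × (Fin _ → E) =>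
      ∑ i, p.1 i • p.2 i) '' (stdSimplex ℝ _ ×ˢ Set.univ.pi fun _ => s) := by
  refine subset_antisymm (fun x hx => ?_) ?_
  · obtain ⟨w, hw, z, hz, rfl⟩ := exists_fin_finrank_succ_of_mem_convexHull hx
    exact ⟨(w, z), ⟨hw, fun i _ => hz i⟩, rfl⟩
  · rintro _ ⟨⟨w, z⟩, ⟨⟨hw₀, hw₁⟩, hz⟩, rfl⟩
    exact (convex_convexHull ℝ s).sum_mem (fun i _ => hw₀ i) hw₁
      fun i _ => subset_convexHull ℝ s (hz i (Set.mem_univ i))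

theorem IsCompact.convexHull {s : Set E} (hs : IsCompact s) : IsCompact (convexHull ℝ s) := by
  rw [convexHull_eq_image_stdSimplex_prod_pi]
  refine ((isCompact_stdSimplex ℝ _).prod (isCompact_univ_pi fun _ => hs)).image ?_
  fun_prop

end CompactConvexHull

section Rademacher

variable {E F : Type*} [NormedAddCommGroup E] [NormedSpace ℝ E] [FiniteDimensional ℝ E]
  [NormedAddCommGroup F] [NormedSpace ℝ F] [FiniteDimensional ℝ F]

open MeasureTheory in
theorem LipschitzOnWith.exists_differentiableAt_of_isOpen {f : E → F} {C : NNReal} {s : Set E}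
    (hf : LipschitzOnWith C f s) (hs : IsOpen s) (hne : s.Nonempty) :
    ∃ x ∈ s, DifferentiableAt ℝ f x := by
  let _ : MeasurableSpace E := borel E
  have _ : BorelSpace E := ⟨rfl⟩
  let μ : Measure E := Measure.addHaar
  have : (ae (μ.restrict s)).NeBot := ae_neBot.2 <| by
    simpa [Measure.restrict_eq_zero] using (hs.measure_pos μ hne).ne'
  have hdiff : ∀ᵐ x ∂μ.restrict s, DifferentiableWithinAt ℝ f s x :=
    (ae_restrict_iff' hs.measurableSet).2 hf.ae_differentiableWithinAt_of_mem
  obtain ⟨x, hxs, hx⟩ := ((ae_restrict_mem hs.measurableSet).and hdiff).exists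
  exact ⟨x, hxs, hx.differentiableAt (hs.mem_nhds hxs)⟩

theorem LocallyLipschitz.dense_differentiableAt {f : E → F} (hf : LocallyLipschitz f) :
    Dense {x | DifferentiableAt ℝ f x} := by
  refine dense_iff_inter_open.2 fun U hU ⟨x, hxU⟩ => ?_
  obtain ⟨K, t, ht, hlip⟩ := hf x
  have hlip' := hlip.mono (Set.inter_subset_right.trans interior_subset : U ∩ interior t ⊆ t)
  obtain ⟨y, hy, hdiff⟩ := hlip'.exists_differentiableAt_of_isOpen (hU.inter isOpen_interior)
    ⟨x, hxU, mem_interior_iff_mem_nhds.2 ht⟩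
  exact ⟨y, hy.1, hdiff⟩

end Rademacher

theorem LocallyLipschitz.exists_eventually_norm_fderiv_le {𝕜 E F : Type*}
    [NontriviallyNormedField 𝕜] [NormedAddCommGroup E] [NormedSpace 𝕜 E]
    [NormedAddCommGroup F] [NormedSpace 𝕜 F] {f : E → F} (hf : LocallyLipschitz f) (a : E) :
    ∃ K : ℝ, ∀ᶠ y in 𝓝 a, ‖fderiv 𝕜 f y‖ ≤ K := by
  obtain ⟨K, t, ht, hlip⟩ := hf a
  exact ⟨K, (eventually_eventually_nhds.2 ht).mono fun y hy =>
    norm_fderiv_le_of_lipschitzOn 𝕜 hy hlip⟩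

section Bouligand

variable {E F : Type*} [NormedAddCommGroup E] [NormedSpace ℝ E]
  [NormedAddCommGroup F] [NormedSpace ℝ F]

def bouligandSubdifferential (f : E → F) (a : E) : Set (E →L[ℝ] F) :=
  {L | ∃ u : ℕ → E, (∀ n, DifferentiableAt ℝ f (u n)) ∧
    Tendsto u atTop (𝓝 a) ∧ Tendsto (fun n => fderiv ℝ f (u n)) atTop (𝓝 L)}

variable {f : E → F} {a : E}

theorem bouligandSubdifferential_eq_setOf_mem_closure :
    bouligandSubdifferential f a =
      {L | (a, L) ∈ closure ((fun x => (x, fderiv ℝ f x)) '' {x | DifferentiableAt ℝ f x})} := by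
  ext L
  simp only [bouligandSubdifferential, Set.mem_ofPred_eq, mem_closure_iff_seq_limit,
    Set.mem_image, nhds_prod_eq, Filter.tendsto_prod_iff']
  constructor
  · rintro ⟨u, hu, hua, huL⟩
    exact ⟨fun n => (u n, fderiv ℝ f (u n)), fun n => ⟨u n, hu n, rfl⟩, hua, huL⟩
  · rintro ⟨p, hp, hpa, hpL⟩
    choose u hu hup using hp
    refine ⟨u, hu, ?_, ?_⟩
    · simpa [← hup] using hpa
    · simpa [← hup] using hpL

theorem isClosed_bouligandSubdifferential : IsClosed (bouligandSubdifferential f a) := by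
  rw [bouligandSubdifferential_eq_setOf_mem_closure]
  exact isClosed_closure.preimage (Continuous.prodMk_right a)

theorem bouligandSubdifferential_subset_closedBall {K : ℝ}
    (hK : ∀ᶠ y in 𝓝 a, ‖fderiv ℝ f y‖ ≤ K) :
    bouligandSubdifferential f a ⊆ Metric.closedBall 0 K := by
  rintro L ⟨u, -, hua, huL⟩
  rw [mem_closedBall_zero_iff]
  exact le_of_tendsto huL.norm (hua.eventually hK)

theorem bouligandSubdifferential_nonempty [ProperSpace (E →L[ℝ] F)] {K : ℝ}
    (ha : a ∈ closure {x | DifferentiableAt ℝ f x})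
    (hK : ∀ᶠ y in 𝓝 a, ‖fderiv ℝ f y‖ ≤ K) :
    (bouligandSubdifferential f a).Nonempty := by
  obtain ⟨u, hu, hua⟩ := mem_closure_iff_seq_limit.1 ha
  obtain ⟨L, -, φ, hφ, hL⟩ := (isCompact_closedBall (0 : E →L[ℝ] F) K).tendsto_subseq'
    (x := fun n => fderiv ℝ f (u n)) <| (hua.eventually hK).frequently.mono fun n hn => by
      simpa using hn
  exact ⟨L, u ∘ φ, fun n => hu (φ n), hua.comp hφ.tendsto_atTop, hL⟩

theorem isCompact_bouligandSubdifferential [ProperSpace (E →L[ℝ] F)] {K : ℝ}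
    (hK : ∀ᶠ y in 𝓝 a, ‖fderiv ℝ f y‖ ≤ K) : IsCompact (bouligandSubdifferential f a) :=
  (isCompact_closedBall 0 K).of_isClosed_subset isClosed_bouligandSubdifferential
    (bouligandSubdifferential_subset_closedBall hK)

end Bouligand

theorem clarkeGradient_eq_convexHull_bouligandSubdifferential {E : Type*}
    [NormedAddCommGroup E] [NormedSpace ℝ E] (f : E → ℝ) (a : E) :
    clarkeGradient f a = convexHull ℝ (bouligandSubdifferential f a) :=
  rfl

/-- For a locally Lipschitz `f : ℝ^n → ℝ`, the Clarke generalized gradient at any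
point is a nonempty compact convex set. -/
theorem clarkeGradient_nonempty_compact_convex (n : ℕ)
    (f : EuclideanSpace ℝ (Fin n) → ℝ) (hf : LocallyLipschitz f)
    (a : EuclideanSpace ℝ (Fin n)) :
    (clarkeGradient f a).Nonempty ∧ IsCompact (clarkeGradient f a) ∧
      Convex ℝ (clarkeGradient f a) := by
  rw [clarkeGradient_eq_convexHull_bouligandSubdifferential]
  obtain ⟨K, hK⟩ := hf.exists_eventually_norm_fderiv_le (𝕜 := ℝ) a
  exact ⟨(bouligandSubdifferential_nonempty (hf.dense_differentiableAt a) hK).convexHull,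
    (isCompact_bouligandSubdifferential hK).convexHull, convex_convexHull ℝ _⟩
end

section
/- Let f : ℝ^n → ℝ be locally Lipschitz near a. If ∂f(a) is a singleton {v}, and f is differentiable at a, then grad f(a) = v and the restriction of grad f to the set of differentiability points is continuous at a. -/
open Filter Topology

/-- If the Clarke generalized gradient at `a` is a singleton `{v}` and `f` is
differentiable at `a`, then `grad f a = v` and the gradient, restricted to the set of
differentiability points, is continuous at `a`. -/
theorem clarkeGradient_singleton (n : ℕ) (f : EuclideanSpace ℝ (Fin n) → ℝ)
    (hf : LocallyLipschitz f) (a : EuclideanSpace ℝ (Fin n))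
    (v : EuclideanSpace ℝ (Fin n) →L[ℝ] ℝ)
    (hsing : clarkeGradient f a = {v}) (hdiff : DifferentiableAt ℝ f a) :
    fderiv ℝ f a = v ∧
      ContinuousWithinAt (fun x => fderiv ℝ f x)
        {x | DifferentiableAt ℝ f x} a := by
  have hmem : fderiv ℝ f a ∈ clarkeGradient f a := by
    apply subset_convexHull
    exact ⟨fun _ => a, fun _ => hdiff, tendsto_const_nhds, tendsto_const_nhds⟩
  rw [hsing, Set.mem_singleton_iff] at hmem
  refine ⟨hmem, ?_⟩
  rw [ContinuousWithinAt, hmem]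
  by_contra hcon
  rw [Metric.tendsto_nhdsWithin_nhds] at hcon
  push_neg at hcon
  obtain ⟨ε, hε, hseq⟩ := hcon
  obtain ⟨K, t, ht, hlip⟩ := hf a
  obtain ⟨r, hr, hball⟩ := Metric.mem_nhds_iff.1 ht
  -- choose the bad sequence
  have hx : ∀ k : ℕ, ∃ x, DifferentiableAt ℝ f x ∧
      dist x a < min (1 / ((k : ℝ) + 1)) r ∧ ε ≤ dist (fderiv ℝ f x) v := by
    intro k
    have hpos : (0 : ℝ) < min (1 / ((k : ℝ) + 1)) r :=
      lt_min (by positivity) hr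
    obtain ⟨x, hx1, hx2, hx3⟩ := hseq _ hpos
    exact ⟨x, hx1, hx2, hx3⟩
  choose x hx1 hx2 hx3 using hx
  have htx : ∀ k, t ∈ 𝓝 (x k) := by
    intro k
    refine mem_nhds_iff.2 ⟨Metric.ball a r, hball, Metric.isOpen_ball, ?_⟩
    exact Metric.mem_ball.2 (lt_of_lt_of_le (hx2 k) (min_le_right _ _))
  have hbound : ∀ k, fderiv ℝ f (x k) ∈ Metric.closedBall (0 : EuclideanSpace ℝ (Fin n) →L[ℝ] ℝ) K := by
    intro k
    rw [Metric.mem_closedBall, dist_zero_right]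
    exact norm_fderiv_le_of_lipschitzOn ℝ (htx k) hlip
  obtain ⟨L, -, φ, hφ, hLt⟩ :=
    (isCompact_closedBall (0 : EuclideanSpace ℝ (Fin n) →L[ℝ] ℝ) K).tendsto_subseq hbound
  have hxa : Tendsto (fun k => x (φ k)) atTop (𝓝 a) := by
    rw [tendsto_iff_dist_tendsto_zero]
    refine squeeze_zero (fun k => dist_nonneg) (fun k => ?_)
      tendsto_one_div_add_atTop_nhds_zero_nat
    calc dist (x (φ k)) a ≤ min (1 / ((φ k : ℝ) + 1)) r := (hx2 (φ k)).le
      _ ≤ 1 / ((φ k : ℝ) + 1) := min_le_left _ _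
      _ ≤ 1 / ((k : ℝ) + 1) := by
          apply one_div_le_one_div_of_le (by positivity)
          have h : (k : ℝ) ≤ (φ k : ℝ) := Nat.cast_le.2 hφ.le_apply
          linarith
  have hLmem : L ∈ clarkeGradient f a := by
    apply subset_convexHull
    exact ⟨fun k => x (φ k), fun k => hx1 (φ k), hxa, hLt⟩
  rw [hsing, Set.mem_singleton_iff] at hLmem
  subst hLmem
  have : Tendsto (fun k => dist (fderiv ℝ f (x (φ k))) L) atTop (𝓝 0) := by
    simpa [dist_eq_norm] using (tendsto_iff_dist_tendsto_zero.1 hLt)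
  have h2 := this.eventually (eventually_lt_nhds hε)
  obtain ⟨k, hk⟩ := h2.exists
  exact absurd (hx3 (φ k)) (not_le.2 hk)
end

section
/- Let M ⊂ ℝ^n be nonempty closed, and suppose the set m(x₀) of closest points of x₀ in M is the disjoint union of k nonempty closed sets M₁,…,M_k, with disjoint open neighbourhoods W_j ⊃ M_j. Define δ_j(x) = dist(x, M ∩ closure(W_j))². Then there exists a neighbourhood U₀ of x₀ such that for all x ∈ U₀, dist(x, M)² = min_{1 ≤ j ≤ k} δ_j(x). -/
open Filter Topology

/-- If the set of closest points of `x₀` in `M` decomposes into `k` disjoint nonempty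
closed pieces `M_j` with open neighbourhoods `W_j` having pairwise disjoint closures,
then near `x₀` we have `dist(x, M)² = min_j dist(x, M ∩ closure (W j))²`. -/
theorem local_min_decomposition_of_sq_dist (n k : ℕ) [NeZero k]
    (M : Set (EuclideanSpace ℝ (Fin n))) (hM : M.Nonempty) (hMc : IsClosed M)
    (x₀ : EuclideanSpace ℝ (Fin n))
    (Mj : Fin k → Set (EuclideanSpace ℝ (Fin n)))
    (hMjne : ∀ j, (Mj j).Nonempty) (hMjc : ∀ j, IsClosed (Mj j))
    (hdecomp : {y ∈ M | ‖x₀ - y‖ = Metric.infDist x₀ M} = ⋃ j, Mj j)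
    (W : Fin k → Set (EuclideanSpace ℝ (Fin n)))
    (hWopen : ∀ j, IsOpen (W j)) (hMjW : ∀ j, Mj j ⊆ W j)
    (hWdisj : Pairwise fun i j => Disjoint (closure (W i)) (closure (W j))) :
    ∃ U₀ ∈ 𝓝 x₀, ∀ x ∈ U₀,
      Metric.infDist x M ^ 2 =
        ⨅ j : Fin k, Metric.infDist x (M ∩ closure (W j)) ^ 2 := by
  haveI : Nonempty (Fin k) := Fin.pos_iff_nonempty.mp (NeZero.pos k)
  set d₀ := Metric.infDist x₀ M with hd₀
  -- each M ∩ closure (W j) is nonempty and contained in M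
  have hsubM : ∀ j, M ∩ closure (W j) ⊆ M := fun j => Set.inter_subset_left
  have hMjsubM : ∀ j, Mj j ⊆ M := by
    intro j y hy
    have : y ∈ ⋃ i, Mj i := Set.mem_iUnion.mpr ⟨j, hy⟩
    rw [← hdecomp] at this
    exact this.1
  have hne : ∀ j, (M ∩ closure (W j)).Nonempty := by
    intro j
    obtain ⟨y, hy⟩ := hMjne j
    exact ⟨y, hMjsubM j hy, subset_closure (hMjW j hy)⟩
  -- the "bad" compact set
  set C := (M ∩ Metric.closedBall x₀ (d₀ + 1)) \ ⋃ j, W j with hC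
  have hCclosed : IsClosed C :=
    (hMc.inter Metric.isClosed_closedBall).sdiff (isOpen_iUnion hWopen)
  -- every point of C is strictly farther than d₀ from x₀
  have hCfar : ∀ y ∈ C, d₀ < dist x₀ y := by
    intro y hy
    have hyM : y ∈ M := hy.1.1
    have hle : d₀ ≤ dist x₀ y := Metric.infDist_le_dist_of_mem hyM
    rcases lt_or_eq_of_le hle with h | h
    · exact h
    · exfalso
      have : y ∈ {y ∈ M | ‖x₀ - y‖ = Metric.infDist x₀ M} := by
        refine ⟨hyM, ?_⟩
        rw [← dist_eq_norm]
        exact h.symm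
      rw [hdecomp] at this
      obtain ⟨j, hj⟩ := Set.mem_iUnion.mp this
      exact hy.2 (Set.mem_iUnion.mpr ⟨j, hMjW j hj⟩)
  -- find ε > 0 so that every y ∈ C has dist x₀ y ≥ d₀ + ε
  have hε : ∃ ε > 0, ∀ y ∈ C, d₀ + ε ≤ dist x₀ y := by
    rcases C.eq_empty_or_nonempty with h | h
    · exact ⟨1, one_pos, by simp [h]⟩
    · have hCcpt : IsCompact C :=
        (isCompact_closedBall x₀ (d₀ + 1)).of_isClosed_subset hCclosed
          (fun y hy => hy.1.2)
      obtain ⟨y, hyC, hyd⟩ := hCcpt.exists_infDist_eq_dist h x₀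
      refine ⟨Metric.infDist x₀ C - d₀, by linarith [hCfar y hyC, hyd], ?_⟩
      intro z hz
      have : Metric.infDist x₀ C ≤ dist x₀ z := Metric.infDist_le_dist_of_mem hz
      linarith
  obtain ⟨ε, hεpos, hεfar⟩ := hε
  refine ⟨Metric.ball x₀ (min (ε / 3) (1 / 3)), Metric.ball_mem_nhds x₀
    (lt_min (by linarith) (by norm_num)), ?_⟩
  intro x hx
  have hx1 : dist x x₀ < ε / 3 := lt_of_lt_of_le hx (min_le_left _ _)
  have hx2 : dist x x₀ < 1 / 3 := lt_of_lt_of_le hx (min_le_right _ _)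
  -- nearest point of x in M
  obtain ⟨y, hyM, hyd⟩ := hMc.exists_infDist_eq_dist hM x
  have hxd : Metric.infDist x M ≤ d₀ + dist x x₀ :=
    Metric.infDist_le_infDist_add_dist
  have hx₀y : dist x₀ y ≤ d₀ + 2 * dist x x₀ := by
    calc dist x₀ y ≤ dist x₀ x + dist x y := dist_triangle _ _ _
    _ = dist x x₀ + Metric.infDist x M := by rw [dist_comm, hyd]
    _ ≤ d₀ + 2 * dist x x₀ := by linarith
  have hyball : y ∈ Metric.closedBall x₀ (d₀ + 1) := by
    rw [Metric.mem_closedBall, dist_comm]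
    linarith
  have hynotC : y ∉ C := by
    intro hyC
    have := hεfar y hyC
    linarith
  have hyW : y ∈ ⋃ j, W j := by
    by_contra h
    exact hynotC ⟨⟨hyM, hyball⟩, h⟩
  obtain ⟨j, hj⟩ := Set.mem_iUnion.mp hyW
  -- conclude
  have hbdd : BddBelow (Set.range fun j : Fin k =>
      Metric.infDist x (M ∩ closure (W j)) ^ 2) := by
    refine ⟨0, ?_⟩
    rintro _ ⟨i, rfl⟩
    positivity
  apply le_antisymm
  · refine le_ciInf fun i => ?_
    have h1 : Metric.infDist x M ≤ Metric.infDist x (M ∩ closure (W i)) :=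
      Metric.infDist_le_infDist_of_subset (hsubM i) (hne i)
    exact pow_le_pow_left₀ Metric.infDist_nonneg h1 2
  · refine le_trans (ciInf_le hbdd j) ?_
    have h1 : Metric.infDist x (M ∩ closure (W j)) ≤ Metric.infDist x M := by
      rw [hyd]
      exact Metric.infDist_le_dist_of_mem ⟨hyM, subset_closure hj⟩
    exact pow_le_pow_left₀ Metric.infDist_nonneg h1 2
end

section
/- For a nonempty compact set K ⊂ ℝ^n, the function δ(x) = dist(x, K)² is locally Lipschitz, and at any point x₀ its Clarke generalized gradient ∂δ(x₀) is contained in the convex hull of {2(x₀ − y) : y ∈ m(x₀)}, where m(x₀) is the set of closest points to x₀ in K. -/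
open Filter Topology

theorem HasFDerivAt.fderiv_eq_of_le_of_eq {E : Type*} [NormedAddCommGroup E] [NormedSpace ℝ E]
    {f g : E → ℝ} {g' : E →L[ℝ] ℝ} {x : E} (hg : HasFDerivAt g g' x) (hfg : f ≤ g)
    (hx : f x = g x) (hf : DifferentiableAt ℝ f x) : fderiv ℝ f x = g' := by
  have hmax : IsLocalMax (fun z => f z - g z) x :=
    Eventually.of_forall fun z => by simpa [hx] using hfg z
  rw [← sub_eq_zero, ← hg.fderiv, ← fderiv_fun_sub hf hg.differentiableAt]
  exact hmax.fderiv_eq_zero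

section PseudoMetricSpace

variable {α ι : Type*} [PseudoMetricSpace α] {K : Set α}

theorem locallyLipschitz_infDist_sq (K : Set α) :
    LocallyLipschitz fun x => Metric.infDist x K ^ 2 :=
  ((contDiff_id (𝕜 := ℝ)).pow 2).locallyLipschitz.comp
    (Metric.lipschitz_infDist_pt K).locallyLipschitz

theorem infDist_eq_dist_of_tendsto {l : Filter ι} [l.NeBot] {u v : ι → α} {x z : α}
    (hu : Tendsto u l (𝓝 x)) (hv : Tendsto v l (𝓝 z))
    (huv : ∀ i, Metric.infDist (u i) K = dist (u i) (v i)) :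
    Metric.infDist x K = dist x z :=
  tendsto_nhds_unique ((Metric.continuous_infDist_pt K).tendsto x |>.comp hu)
    (by simpa only [Function.comp_def, huv] using hu.dist hv)

end PseudoMetricSpace

section InnerProductSpace

variable {E : Type*} [NormedAddCommGroup E] [InnerProductSpace ℝ E] {K : Set E}

theorem hasFDerivAt_norm_sub_sq (x y : E) :
    HasFDerivAt (fun z => ‖z - y‖ ^ 2) ((2 : ℝ) • innerSL ℝ (x - y)) x := by
  simpa [ofNat_smul_eq_nsmul] using ((hasFDerivAt_id x).sub_const y).norm_sq

theorem fderiv_infDist_sq_eq {x y : E} (hy : y ∈ K) (hxy : Metric.infDist x K = dist x y)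
    (hd : DifferentiableAt ℝ (fun z => Metric.infDist z K ^ 2) x) :
    fderiv ℝ (fun z => Metric.infDist z K ^ 2) x = (2 : ℝ) • innerSL ℝ (x - y) := by
  refine (hasFDerivAt_norm_sub_sq x y).fderiv_eq_of_le_of_eq (fun z => ?_) ?_ hd
  · exact pow_le_pow_left₀ Metric.infDist_nonneg
      ((Metric.infDist_le_dist_of_mem hy).trans_eq (dist_eq_norm z y)) 2
  · simp only [hxy, dist_eq_norm]

theorem IsCompact.exists_closest_of_tendsto_fderiv_infDist_sq (hK : IsCompact K)
    (hKne : K.Nonempty) {u : ℕ → E} {x : E} {L : E →L[ℝ] ℝ}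
    (hd : ∀ m, DifferentiableAt ℝ (fun z => Metric.infDist z K ^ 2) (u m))
    (hu : Tendsto u atTop (𝓝 x))
    (hL : Tendsto (fun m => fderiv ℝ (fun z => Metric.infDist z K ^ 2) (u m)) atTop (𝓝 L)) :
    ∃ y ∈ K, ‖x - y‖ = Metric.infDist x K ∧ L = (2 : ℝ) • innerSL ℝ (x - y) := by
  choose y hyK hyu using fun m => hK.exists_infDist_eq_dist hKne (u m)
  obtain ⟨z, hzK, φ, hφ, hyz⟩ := hK.tendsto_subseq hyK
  have huφ : Tendsto (u ∘ φ) atTop (𝓝 x) := hu.comp hφ.tendsto_atTop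
  have hgrad : Tendsto (fun m => fderiv ℝ (fun z => Metric.infDist z K ^ 2) (u (φ m))) atTop
      (𝓝 ((2 : ℝ) • innerSL ℝ (x - z))) := by
    simp_rw [fun m => fderiv_infDist_sq_eq (hyK (φ m)) (hyu (φ m)) (hd (φ m))]
    exact (((innerSL ℝ).continuous.tendsto _).comp (huφ.sub hyz)).const_smul 2
  refine ⟨z, hzK, ?_, tendsto_nhds_unique (hL.comp hφ.tendsto_atTop) hgrad⟩
  rw [infDist_eq_dist_of_tendsto huφ hyz fun m => hyu (φ m), dist_eq_norm]

end InnerProductSpace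

/-- For a nonempty compact `K`, `δ(x) = dist(x, K)²` is locally Lipschitz, and its
Clarke generalized gradient at `x₀` is contained in the convex hull of
`{2⟨x₀ - y, ·⟩ : y a closest point to x₀ in K}`. -/
theorem clarkeGradient_sq_dist_subset (n : ℕ) (K : Set (EuclideanSpace ℝ (Fin n)))
    (hKne : K.Nonempty) (hKc : IsCompact K)
    (δ : EuclideanSpace ℝ (Fin n) → ℝ) (hδ : ∀ x, δ x = Metric.infDist x K ^ 2)
    (x₀ : EuclideanSpace ℝ (Fin n)) :
    LocallyLipschitz δ ∧
      clarkeGradient δ x₀ ⊆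
        convexHull ℝ {L : EuclideanSpace ℝ (Fin n) →L[ℝ] ℝ |
          ∃ y ∈ {y ∈ K | ‖x₀ - y‖ = Metric.infDist x₀ K},
            L = (2 : ℝ) • innerSL ℝ (x₀ - y)} := by
  obtain rfl : δ = fun x => Metric.infDist x K ^ 2 := funext hδ
  refine ⟨locallyLipschitz_infDist_sq K, convexHull_mono ?_⟩
  rintro L ⟨u, hd, hu, hL⟩
  obtain ⟨y, hyK, hy, rfl⟩ := hKc.exists_closest_of_tendsto_fderiv_infDist_sq hKne hd hu hL
  exact ⟨y, ⟨hyK, hy⟩, rfl⟩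
end
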